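/- Let F : A → B be an additive functor between additive categories that is full, dense, and reflects isomorphisms (an epivalence). Then F preserves and reflects indecomposability: an object X of A with local-enough behavior is indecomposable if and only if F(X) is indecomposable, and every indecomposable object of B is isomorphic to F(X) for some indecomposable X in A. -/
import Mathlib


open CategoryTheory CategoryTheory.Limits

set_option linter.unusedSectionVars false

section Aux

variable {A B : Type*} [Category A] [Category B] [Preadditive A] [Preadditive B]
    (F : A ⥤ B) [F.Additive] [F.Full] [F.ReflectsIsomorphisms]

lemma stmt15_isZero_of_map {X : A} (h : IsZero (F.obj X)) : IsZero X := by
  rw [IsZero.iff_id_eq_zero] at h ⊢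
  have : IsIso (F.map (0 : X ⟶ X)) := by
    rw [F.map_zero, ← h]; infer_instance
  have : IsIso (0 : X ⟶ X) := isIso_of_reflects_iso (0 : X ⟶ X) F
  calc 𝟙 X = (0 : X ⟶ X) ≫ inv (0 : X ⟶ X) := (IsIso.hom_inv_id _).symm
    _ = 0 := zero_comp

lemma stmt15_map_isZero {X : A} (h : IsZero X) : IsZero (F.obj X) := by
  rw [IsZero.iff_id_eq_zero] at h ⊢
  rw [← F.map_id, h, F.map_zero]

/-- Full functors reflecting isomorphisms reflect isomorphy of objects. -/
noncomputable def stmt15_isoOfMapIso {X Y : A} (e : F.obj X ≅ F.obj Y) : X ≅ Y := by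
  have : IsIso (F.map (F.preimage e.hom)) := by
    rw [F.map_preimage]; infer_instance
  have : IsIso (F.preimage e.hom) := isIso_of_reflects_iso _ F
  exact asIso (F.preimage e.hom)

end Aux

/-- An additive epivalence (a full, dense functor reflecting isomorphisms) between
additive categories with split idempotents preserves and reflects indecomposability,
and every indecomposable object of the target lifts, up to isomorphism, to an
indecomposable object of the source. -/
theorem stmt15 {A B : Type*} [Category A] [Category B] [Preadditive A] [Preadditive B]
    [HasBinaryBiproducts A] [HasBinaryBiproducts B]
    [IsIdempotentComplete A] [IsIdempotentComplete B]
    (F : A ⥤ B) [F.Additive] [F.Full] [F.EssSurj] [F.ReflectsIsomorphisms] :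
    (∀ X : A, Indecomposable X ↔ Indecomposable (F.obj X)) ∧
    (∀ Y : B, Indecomposable Y →
      ∃ X : A, Indecomposable X ∧ Nonempty (F.obj X ≅ Y)) := by
  have : PreservesBinaryBiproducts F := preservesBinaryBiproducts_of_preservesBiproducts F
  have main : ∀ X : A, Indecomposable X ↔ Indecomposable (F.obj X) := by
    intro X
    constructor
    · rintro ⟨hX, hdec⟩
      constructor
      · intro h
        exact hX (stmt15_isZero_of_map F h)
      · intro Y Z e
        set Y' := F.objPreimage Y with hY'
        set Z' := F.objPreimage Z with hZ'
        have eY : F.obj Y' ≅ Y := F.objObjPreimageIso Y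
        have eZ : F.obj Z' ≅ Z := F.objObjPreimageIso Z
        have e' : F.obj X ≅ F.obj (Y' ⊞ Z') :=
          e ≪≫ (biprod.mapIso eY.symm eZ.symm) ≪≫ (F.mapBiprod Y' Z').symm
        rcases hdec Y' Z' (stmt15_isoOfMapIso F e') with h | h
        · exact Or.inl ((stmt15_map_isZero F h).of_iso eY.symm)
        · exact Or.inr ((stmt15_map_isZero F h).of_iso eZ.symm)
    · rintro ⟨hX, hdec⟩
      constructor
      · intro h
        exact hX (stmt15_map_isZero F h)
      · intro Y Z e
        have e' : F.obj X ≅ F.obj Y ⊞ F.obj Z :=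
          F.mapIso e ≪≫ F.mapBiprod Y Z
        rcases hdec _ _ e' with h | h
        · exact Or.inl (stmt15_isZero_of_map F h)
        · exact Or.inr (stmt15_isZero_of_map F h)
  refine ⟨main, fun Y hY => ?_⟩
  refine ⟨F.objPreimage Y, ?_, ⟨F.objObjPreimageIso Y⟩⟩
  rw [main]
  exact ⟨fun h => hY.1 (h.of_iso (F.objObjPreimageIso Y).symm),
    fun Y' Z' e => hY.2 Y' Z' ((F.objObjPreimageIso Y).symm ≪≫ e)⟩
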